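/- Consider a run of the preemptive greedy algorithm with parameter β > 0 on a finite simple graph G whose vertex enumeration v_1, …, v_n is an inductively k-independent ordering (k ≥ 1), with a monotone, normalized, submodular function f, producing the sets S_0, …, S_n and the set U of all elements ever added. Then for every independent set T of G, f(U ∪ T) − f(U) ≤ k (1+β)(1 + 1/β) · f(S_n). -/

import Mathlib

/-!
A vertex `t ∈ T` that was never added was rejected at step `t`, so by submodularity its marginal
value over `U` is below `(1 + β)` times the incremental values of its conflicts at that time, and
these values only grow until each conflict's last appearance in the run. Charging `t` to its
conflicts, an element `c ∈ U` is charged by an independent set of later neighbours of `c`, hence at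
most `k` times. Finally, the last incremental values of the elements of `S_n` add up to `f(S_n)`,
and those of evicted elements are paid for by the gains of the accepted steps that evicted them,
which add up to at most `f(S_n) / β`.
-/

open Finset

/-- A set of vertices is independent if no two of its vertices are adjacent. -/
def IsIndep {n : ℕ} (G : SimpleGraph (Fin n)) (S : Finset (Fin n)) : Prop :=
  ∀ u ∈ S, ∀ v ∈ S, ¬ G.Adj u v

/-- `A_i`: the neighbors of `v_i` that come after `v_i` in the ordering. -/
def laterNbrs {n : ℕ} (G : SimpleGraph (Fin n)) [DecidableRel G.Adj] (i : Fin n) :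
    Finset (Fin n) :=
  Finset.univ.filter (fun j => G.Adj i j ∧ i < j)

/-- `B_i`: the neighbors of `v_i` that come before `v_i` in the ordering. -/
def earlierNbrs {n : ℕ} (G : SimpleGraph (Fin n)) [DecidableRel G.Adj] (i : Fin n) :
    Finset (Fin n) :=
  Finset.univ.filter (fun j => G.Adj i j ∧ j < i)

/-- The enumeration of `Fin n` (in its natural order) is an inductively `k`-independent
ordering of `G`. -/
def InductivelyKIndep {n : ℕ} (G : SimpleGraph (Fin n)) [DecidableRel G.Adj] (k : ℕ) : Prop :=
  ∀ i : Fin n, ∀ S ⊆ laterNbrs G i, IsIndep G S → S.card ≤ k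

/-- A set function is submodular. -/
def Submodular {V : Type*} [DecidableEq V] (f : Finset V → ℝ) : Prop :=
  ∀ A B : Finset V, f (A ∪ B) + f (A ∩ B) ≤ f A + f B

/-- The incremental value `ν_f(S, e) = f(S' ∪ {e}) - f(S')` where `S' = {s ∈ S : s < e}`. -/
def incv {V : Type*} [LinearOrder V] (f : Finset V → ℝ) (S : Finset V) (e : V) : ℝ :=
  f (insert e (S.filter (fun s => s < e))) - f (S.filter (fun s => s < e))

/-- The conflict set `C_i = N(v_i) ∩ S` of vertex `i` against the current set `S`. -/
def conflictSet {n : ℕ} (G : SimpleGraph (Fin n)) [DecidableRel G.Adj] (i : Fin n)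
    (S : Finset (Fin n)) : Finset (Fin n) :=
  S.filter (fun u => G.Adj i u)

/-- Step `i` of the preemptive greedy algorithm with parameter `β` is accepted:
`f_{S_{i-1}}(v_i) ≥ (1+β) ∑_{c ∈ C_i} ν_f(S_{i-1}, c)`, where `S_{i-1} = S i.val`. -/
def AcceptedStep {n : ℕ} (G : SimpleGraph (Fin n)) [DecidableRel G.Adj]
    (f : Finset (Fin n) → ℝ) (β : ℝ) (S : ℕ → Finset (Fin n)) (i : Fin n) : Prop :=
  (1 + β) * ∑ c ∈ conflictSet G i (S i.val), incv f (S i.val) c ≤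
    f (insert i (S i.val)) - f (S i.val)

/-- `S : ℕ → Finset (Fin n)` is a run of the preemptive greedy algorithm with parameter `β`:
`S 0 = ∅`, and at each step `i` the vertex `v_i` is accepted (replacing its conflict set) iff
its marginal value is at least `(1+β)` times the total incremental value of its conflicts. -/
def IsGreedyRun {n : ℕ} (G : SimpleGraph (Fin n)) [DecidableRel G.Adj]
    (f : Finset (Fin n) → ℝ) (β : ℝ) (S : ℕ → Finset (Fin n)) : Prop :=
  S 0 = ∅ ∧ ∀ i : Fin n,
    (AcceptedStep G f β S i →
      S (i.val + 1) = (S i.val \ conflictSet G i (S i.val)) ∪ {i}) ∧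
    (¬ AcceptedStep G f β S i → S (i.val + 1) = S i.val)

/-- `U`: the set of all elements ever (even momentarily) added to the current set. -/
def everAdded {n : ℕ} (S : ℕ → Finset (Fin n)) : Finset (Fin n) :=
  (Finset.range (n + 1)).biUnion S

namespace Submodular

variable {V : Type*} [DecidableEq V] {f : Finset V → ℝ}

theorem marginal_le_of_subset (hf : Submodular f) {A B : Finset V} {e : V} (hAB : A ⊆ B)
    (he : e ∉ B) : f (insert e B) - f B ≤ f (insert e A) - f A := by
  have key := hf (insert e A) B
  rw [insert_union, union_eq_right.mpr hAB, insert_inter_of_notMem he,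
    inter_eq_left.mpr hAB] at key
  linarith

theorem sub_le_sum_marginal (hf : Submodular f) (U D : Finset V) :
    f (U ∪ D) - f U ≤ ∑ t ∈ D, (f (insert t U) - f U) := by
  induction D using Finset.induction_on with
  | empty => simp
  | @insert a D haD ih =>
    rw [sum_insert haD, union_insert]
    by_cases haU : a ∈ U
    · rw [insert_eq_of_mem (mem_union_left D haU), insert_eq_of_mem haU]
      linarith
    · have hmarg : f (insert a (U ∪ D)) - f (U ∪ D) ≤ f (insert a U) - f U :=
        hf.marginal_le_of_subset subset_union_left (by simp [haU, haD])
      linarith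

end Submodular

theorem Finset.sum_sum_le_mul_sum_of_card_le {α γ R : Type*} [DecidableEq γ] [CommSemiring R]
    [PartialOrder R] [IsOrderedRing R] {s : Finset α} {t : Finset γ} {C : α → Finset γ}
    {w : γ → R} {k : ℕ} (hC : ∀ a ∈ s, C a ⊆ t) (hw : ∀ b ∈ t, 0 ≤ w b)
    (hk : ∀ b ∈ t, #{a ∈ s | b ∈ C a} ≤ k) :
    ∑ a ∈ s, ∑ b ∈ C a, w b ≤ k * ∑ b ∈ t, w b := by
  rw [sum_comm' (t' := t) (s' := fun b => {a ∈ s | b ∈ C a})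
    (fun a b => ⟨fun h => ⟨mem_filter.mpr h, hC a h.1 h.2⟩, fun h => (mem_filter.mp h.1)⟩),
    mul_sum]
  refine sum_le_sum fun b hb => ?_
  rw [sum_const, nsmul_eq_mul]
  exact mul_le_mul_of_nonneg_right (Nat.mono_cast (hk b hb)) (hw b hb)

section IncrementalValue

variable {V : Type*} [LinearOrder V] {f : Finset V → ℝ}

theorem incv_nonneg (hmono : Monotone f) (S : Finset V) (e : V) : 0 ≤ incv f S e :=
  sub_nonneg.mpr (hmono (subset_insert _ _))

theorem Submodular.incv_le_incv (hf : Submodular f) {S S' : Finset V} {e : V}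
    (h : S'.filter (· < e) ⊆ S.filter (· < e)) : incv f S e ≤ incv f S' e :=
  hf.marginal_le_of_subset h (by simp)

theorem incv_insert_of_lt {s : Finset V} {a x : V} (hxa : x < a) :
    incv f (insert a s) x = incv f s x := by
  simp [incv, filter_insert, not_lt.mpr hxa.le]

theorem sum_incv_self (D : Finset V) : ∑ c ∈ D, incv f D c = f D - f ∅ := by
  induction D using Finset.induction_on_max with
  | empty => simp
  | insert a s hlt ih =>
    have has : a ∉ s := fun h => (hlt a h).false
    have hfilter : (insert a s).filter (· < a) = s := by
      rw [filter_insert, if_neg (lt_irrefl a), filter_true_of_mem hlt]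
    rw [sum_insert has, sum_congr rfl fun x hx => incv_insert_of_lt (hlt x hx), ih, incv,
      hfilter]
    ring

theorem Submodular.sub_sdiff_le_sum_incv (hf : Submodular f) {C D : Finset V} (hCD : C ⊆ D) :
    f D - f (D \ C) ≤ ∑ c ∈ C, incv f D c := by
  have hrest : ∑ c ∈ D \ C, incv f D c ≤ ∑ c ∈ D \ C, incv f (D \ C) c :=
    sum_le_sum fun c _ => hf.incv_le_incv (filter_subset_filter _ sdiff_subset)
  have hsplit := sum_sdiff hCD (f := incv f D)
  rw [sum_incv_self] at hrest hsplit
  linarith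

end IncrementalValue

theorem subset_everAdded {n : ℕ} (S : ℕ → Finset (Fin n)) {m : ℕ} (hm : m ≤ n) :
    S m ⊆ everAdded S := fun _ hx => mem_biUnion.mpr ⟨m, mem_range.mpr (by omega), hx⟩

theorem IsIndep.mono {n : ℕ} {G : SimpleGraph (Fin n)} {S T : Finset (Fin n)}
    (hT : IsIndep G T) (hST : S ⊆ T) : IsIndep G S :=
  fun u hu v hv => hT u (hST hu) v (hST hv)

-- `0` when `c ∉ everAdded S`.
def lastTime {n : ℕ} (S : ℕ → Finset (Fin n)) (c : Fin n) : ℕ :=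
  Nat.findGreatest (fun m => c ∈ S m) n

def lastIncv {n : ℕ} (f : Finset (Fin n) → ℝ) (S : ℕ → Finset (Fin n)) (c : Fin n) : ℝ :=
  incv f (S (lastTime S c)) c

section LastTime

variable {n : ℕ} {S : ℕ → Finset (Fin n)} {c : Fin n}

theorem lastTime_le : lastTime S c ≤ n := Nat.findGreatest_le n

theorem le_lastTime {m : ℕ} (hm : m ≤ n) (hc : c ∈ S m) : m ≤ lastTime S c :=
  Nat.le_findGreatest hm hc

theorem mem_lastTime (hc : c ∈ everAdded S) : c ∈ S (lastTime S c) := by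
  obtain ⟨m, hm, hcm⟩ := mem_biUnion.mp hc
  exact Nat.findGreatest_spec (P := fun m => c ∈ S m) (Nat.lt_succ_iff.mp (mem_range.mp hm)) hcm

theorem mem_sdiff_succ_lastTime (hc : c ∈ everAdded S \ S n) :
    lastTime S c < n ∧ c ∈ S (lastTime S c) \ S (lastTime S c + 1) := by
  obtain ⟨hcU, hcn⟩ := mem_sdiff.mp hc
  have hmem := mem_lastTime hcU
  have hlt : lastTime S c < n :=
    lastTime_le.lt_of_ne fun h => hcn (by rwa [h] at hmem)
  exact ⟨hlt, mem_sdiff.mpr ⟨hmem, fun h => (le_lastTime hlt h).not_gt (Nat.lt_succ_self _)⟩⟩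

end LastTime

namespace IsGreedyRun

variable {n : ℕ} {G : SimpleGraph (Fin n)} [DecidableRel G.Adj] {f : Finset (Fin n) → ℝ}
  {β : ℝ} {S : ℕ → Finset (Fin n)}

theorem succ_subset_insert (hrun : IsGreedyRun G f β S) (i : Fin n) :
    S (i + 1) ⊆ insert i (S i) := by
  by_cases hacc : AcceptedStep G f β S i
  · rw [(hrun.2 i).1 hacc, union_comm, ← insert_eq]
    exact insert_subset_insert _ sdiff_subset
  · rw [(hrun.2 i).2 hacc]
    exact subset_insert _ _

theorem lt_of_mem (hrun : IsGreedyRun G f β S) {m : ℕ} (hm : m ≤ n) {j : Fin n}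
    (hj : j ∈ S m) : (j : ℕ) < m := by
  induction m generalizing j with
  | zero => simp [hrun.1] at hj
  | succ m ih =>
    rcases mem_insert.mp (hrun.succ_subset_insert ⟨m, hm⟩ hj) with rfl | hj
    · exact Nat.lt_succ_self m
    · exact Nat.lt_succ_of_lt (ih (by omega) hj)

/-- Only vertices later than all current ones are ever added, so the predecessors of `c` in the
current set can only disappear over time. -/
theorem filter_lt_subset (hrun : IsGreedyRun G f β S) {c : Fin n} {m m' : ℕ} (hcm : (c : ℕ) < m)
    (hmm' : m ≤ m') (hm' : m' ≤ n) : (S m').filter (· < c) ⊆ (S m).filter (· < c) := by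
  induction m', hmm' using Nat.le_induction with
  | base => exact Subset.rfl
  | succ m' hmm' ih =>
    refine Subset.trans (fun x hx => ?_) (ih (by omega))
    obtain ⟨hx, hxc⟩ := mem_filter.mp hx
    rcases mem_insert.mp (hrun.succ_subset_insert ⟨m', hm'⟩ hx) with rfl | hx
    · exact absurd (Fin.lt_def.mp hxc) (by dsimp only; omega)
    · exact mem_filter.mpr ⟨hx, hxc⟩

theorem incv_le_lastIncv (hrun : IsGreedyRun G f β S) (hsub : Submodular f) {c : Fin n} {m : ℕ}
    (hm : m ≤ n) (hc : c ∈ S m) : incv f (S m) c ≤ lastIncv f S c :=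
  hsub.incv_le_incv (hrun.filter_lt_subset (hrun.lt_of_mem hm hc) (le_lastTime hm hc)
    lastTime_le)

theorem not_acceptedStep (hrun : IsGreedyRun G f β S) {t : Fin n} (ht : t ∉ everAdded S) :
    ¬ AcceptedStep G f β S t := fun hacc =>
  ht <| subset_everAdded S t.isLt <| by simp [(hrun.2 t).1 hacc]

theorem marginal_le_sum_lastIncv (hrun : IsGreedyRun G f β S) (hsub : Submodular f)
    (hβ : 0 ≤ 1 + β) {t : Fin n} (ht : t ∉ everAdded S) :
    f (insert t (everAdded S)) - f (everAdded S) ≤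
      (1 + β) * ∑ c ∈ conflictSet G t (S t), lastIncv f S c :=
  calc f (insert t (everAdded S)) - f (everAdded S)
      ≤ f (insert t (S t)) - f (S t) :=
        hsub.marginal_le_of_subset (subset_everAdded S t.isLt.le) ht
    _ ≤ (1 + β) * ∑ c ∈ conflictSet G t (S t), incv f (S t) c :=
        (not_le.mp (hrun.not_acceptedStep ht)).le
    _ ≤ (1 + β) * ∑ c ∈ conflictSet G t (S t), lastIncv f S c := by
        gcongr with c hc
        exact hrun.incv_le_lastIncv hsub t.isLt.le (mem_filter.mp hc).1

-- A rejected step evicts nothing; an accepted one evicts exactly its conflict set.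
theorem mul_sum_incv_sdiff_le (hrun : IsGreedyRun G f β S) (hsub : Submodular f) (i : Fin n) :
    β * ∑ c ∈ S i \ S (i + 1), incv f (S i) c ≤ f (S (i + 1)) - f (S i) := by
  by_cases hacc : AcceptedStep G f β S i
  · set C := conflictSet G i (S i)
    have hi : i ∉ S i := fun h => lt_irrefl _ (hrun.lt_of_mem i.isLt.le h)
    have hnext : S (i + 1) = insert i (S i \ C) := by
      rw [(hrun.2 i).1 hacc, union_comm, ← insert_eq]
    have hevicted : S i \ S (i + 1) = C := by
      ext x
      have hCS : x ∈ C → x ∈ S i := fun h => (mem_filter.mp h).1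
      rw [hnext, mem_sdiff, mem_insert, mem_sdiff]
      constructor
      · tauto
      · exact fun hx => ⟨hCS hx, by rintro (rfl | h) <;> tauto⟩
    have hgain := hsub.marginal_le_of_subset (sdiff_subset (t := C)) hi
    have hloss := hsub.sub_sdiff_le_sum_incv (C := C) (filter_subset _ _)
    have hacc' : (1 + β) * ∑ c ∈ C, incv f (S i) c ≤ f (insert i (S i)) - f (S i) := hacc
    rw [hevicted, hnext]
    linarith
  · simp [(hrun.2 i).2 hacc]

theorem mul_sum_lastIncv_sdiff_le (hrun : IsGreedyRun G f β S) (hsub : Submodular f)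
    (hmono : Monotone f) (hβ : 0 ≤ β) :
    β * ∑ c ∈ everAdded S \ S n, lastIncv f S c ≤ f (S n) - f (S 0) := by
  have hfiber : ∀ m ∈ range n, ∑ c ∈ everAdded S \ S n with lastTime S c = m, lastIncv f S c ≤
      ∑ c ∈ S m \ S (m + 1), incv f (S m) c := by
    intro m _
    rw [sum_congr rfl fun c hc => by rw [lastIncv, (mem_filter.mp hc).2]]
    refine sum_le_sum_of_subset_of_nonneg (fun c hc => ?_) fun c _ _ => incv_nonneg hmono _ c
    obtain ⟨hcU, rfl⟩ := mem_filter.mp hc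
    exact (mem_sdiff_succ_lastTime hcU).2
  rw [← sum_fiberwise_of_maps_to fun c hc => mem_range.mpr (mem_sdiff_succ_lastTime hc).1,
    ← sum_range_sub (fun m => f (S m))]
  calc β * ∑ m ∈ range n, ∑ c ∈ everAdded S \ S n with lastTime S c = m, lastIncv f S c
      ≤ β * ∑ m ∈ range n, ∑ c ∈ S m \ S (m + 1), incv f (S m) c := by
        gcongr with m hm
        exact hfiber m hm
    _ ≤ ∑ m ∈ range n, (f (S (m + 1)) - f (S m)) := by
        rw [mul_sum]
        exact sum_le_sum fun m hm => hrun.mul_sum_incv_sdiff_le hsub ⟨m, mem_range.mp hm⟩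

theorem sum_lastIncv_le (hrun : IsGreedyRun G f β S) (hsub : Submodular f) (hmono : Monotone f)
    (hnorm : f ∅ = 0) (hβ : 0 < β) :
    ∑ c ∈ everAdded S, lastIncv f S c ≤ (1 + 1 / β) * f (S n) := by
  have hfinal : ∑ c ∈ S n, lastIncv f S c = f (S n) := by
    rw [← sub_zero (f (S n)), ← hnorm, ← sum_incv_self]
    refine sum_congr rfl fun c hc => ?_
    rw [lastIncv, le_antisymm lastTime_le (le_lastTime le_rfl hc)]
  have hevicted := hrun.mul_sum_lastIncv_sdiff_le hsub hmono hβ.le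
  rw [hrun.1, hnorm, sub_zero, ← le_div_iff₀' hβ] at hevicted
  rw [← sum_sdiff (subset_everAdded S le_rfl), hfinal, add_mul, one_mul, one_div_mul_eq_div]
  linarith

theorem card_filter_mem_conflictSet_le (hrun : IsGreedyRun G f β S) {k : ℕ}
    (hG : InductivelyKIndep G k) {T : Finset (Fin n)} (hT : IsIndep G T) (c : Fin n) :
    #{t ∈ T | c ∈ conflictSet G t (S t)} ≤ k := by
  refine hG c _ (fun t ht => ?_) (hT.mono (filter_subset _ _))
  obtain ⟨hcS, hadj⟩ := mem_filter.mp (mem_filter.mp ht).2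
  exact mem_filter.mpr ⟨mem_univ t, hadj.symm, hrun.lt_of_mem t.isLt.le hcS⟩

end IsGreedyRun

theorem margin_against_all_taken_general {n k : ℕ}
    (G : SimpleGraph (Fin n)) [DecidableRel G.Adj]
    (hG : InductivelyKIndep G k)
    (f : Finset (Fin n) → ℝ) (hsub : Submodular f)
    (hmono : ∀ A B : Finset (Fin n), A ⊆ B → f A ≤ f B) (hnorm : f ∅ = 0)
    (β : ℝ) (hβ : 0 < β)
    (S : ℕ → Finset (Fin n)) (hrun : IsGreedyRun G f β S)
    (T : Finset (Fin n)) (hT : IsIndep G T) :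
    f (everAdded S ∪ T) - f (everAdded S) ≤ k * (1 + β) * (1 + 1 / β) * f (S n) := by
  set U := everAdded S
  have hmono' : Monotone f := hmono
  calc f (U ∪ T) - f U ≤ ∑ t ∈ T \ U, (f (insert t U) - f U) := by
        simpa only [union_sdiff_self_eq_union] using hsub.sub_le_sum_marginal U (T \ U)
    _ ≤ ∑ t ∈ T \ U, (1 + β) * ∑ c ∈ conflictSet G t (S t), lastIncv f S c :=
        sum_le_sum fun t ht => hrun.marginal_le_sum_lastIncv hsub (by linarith) (mem_sdiff.mp ht).2
    _ = (1 + β) * ∑ t ∈ T \ U, ∑ c ∈ conflictSet G t (S t), lastIncv f S c := (mul_sum ..).symm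
    _ ≤ (1 + β) * (k * ∑ c ∈ U, lastIncv f S c) := by
        gcongr
        exact sum_sum_le_mul_sum_of_card_le
          (fun t _ => (filter_subset _ _).trans (subset_everAdded S t.isLt.le))
          (fun c _ => incv_nonneg hmono' _ c)
          (fun c _ => hrun.card_filter_mem_conflictSet_le hG (hT.mono sdiff_subset) c)
    _ ≤ (1 + β) * (k * ((1 + 1 / β) * f (S n))) := by
        gcongr
        exact hrun.sum_lastIncv_le hsub hmono' hnorm hβ
    _ = k * (1 + β) * (1 + 1 / β) * f (S n) := by ring

/-- Lemma `margin-against-all-taken`: for every independent set `T`,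
`f(U ∪ T) − f(U) ≤ k (1+β)(1 + 1/β) f(S_n)`. -/
theorem margin_against_all_taken {n k : ℕ} (hk : 1 ≤ k)
    (G : SimpleGraph (Fin n)) [DecidableRel G.Adj]
    (hG : InductivelyKIndep G k)
    (f : Finset (Fin n) → ℝ) (hsub : Submodular f)
    (hmono : ∀ A B : Finset (Fin n), A ⊆ B → f A ≤ f B) (hnorm : f ∅ = 0)
    (β : ℝ) (hβ : 0 < β)
    (S : ℕ → Finset (Fin n)) (hrun : IsGreedyRun G f β S)
    (T : Finset (Fin n)) (hT : IsIndep G T) :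
    f (everAdded S ∪ T) - f (everAdded S) ≤ k * (1 + β) * (1 + 1 / β) * f (S n) :=
  margin_against_all_taken_general G hG f hsub hmono hnorm β hβ S hrun T hT
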